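/- arXiv:cs/0207037 — 5 statements merged into one kernel-verified Lean document; each statement's English description precedes it below -/
import Mathlib

section
/- The consequence operation C_WBD of the logic WBD satisfies Inclusion (Γ ⊆ C_WBD(Γ)), Idempotency (C_WBD(Γ) = C_WBD(C_WBD(Γ))), Monotonicity (Γ ⊆ Δ implies C_WBD(Γ) ⊆ C_WBD(Δ)), and Compactness (if α ∈ C_WBD(Γ) then α ∈ C_WBD(Γ′) for some finite Γ′ ⊆ Γ), for all information sets Γ, Δ ⊆ L and all α ∈ L. -/
/-- Propositional formulas over a set of atoms `A`, with the usual connectives,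
`⊥` and `⊤`. -/
inductive PLForm (A : Type) : Type
  | atom   : A → PLForm A
  | falsum : PLForm A
  | verum  : PLForm A
  | neg    : PLForm A → PLForm A
  | conj   : PLForm A → PLForm A → PLForm A
  | disj   : PLForm A → PLForm A → PLForm A
  | impl   : PLForm A → PLForm A → PLForm A

/-- Evaluation of a propositional formula under a classical valuation. -/
def PLForm.eval {A : Type} (v : A → Bool) : PLForm A → Bool
  | .atom a   => v a
  | .falsum   => false
  | .verum    => true
  | .neg φ    => !(PLForm.eval v φ)
  | .conj φ ψ => PLForm.eval v φ && PLForm.eval v ψ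
  | .disj φ ψ => PLForm.eval v φ || PLForm.eval v ψ
  | .impl φ ψ => !(PLForm.eval v φ) || PLForm.eval v ψ

/-- Classical propositional consequence `X ⊢_PL φ`: every valuation satisfying
all members of `X` satisfies `φ`. -/
def PLCons {A : Type} (X : Set (PLForm A)) (φ : PLForm A) : Prop :=
  ∀ v : A → Bool, (∀ ψ ∈ X, PLForm.eval v ψ = true) → PLForm.eval v φ = true

/-- The language `L = L_B ∪ L_D`: a potential belief `φ` or a potential
disbelief `φ̄` for each propositional formula `φ`. -/
inductive LSent (A : Type) : Type
  | bel : PLForm A → LSent A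
  | dis : PLForm A → LSent A

/-- The set of potential beliefs `L_B`. -/
def LB (A : Type) : Set (LSent A) := Set.range LSent.bel

/-- The set of potential disbeliefs `L_D`. -/
def LD (A : Type) : Set (LSent A) := Set.range LSent.dis

/-- The propositional formulas believed in `Γ` (so that `Γ_B` corresponds to
`LSent.bel '' bels Γ = Γ ∩ LB A`). -/
def bels {A : Type} (Γ : Set (LSent A)) : Set (PLForm A) := {φ | LSent.bel φ ∈ Γ}

/-- The propositional formulas disbelieved in `Γ`. -/
def diss {A : Type} (Γ : Set (LSent A)) : Set (PLForm A) := {φ | LSent.dis φ ∈ Γ}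

/-- The logic WBD: smallest relation closed under (B), (D⊥) and (WD). -/
inductive WBD {A : Type} : Set (LSent A) → LSent A → Prop
  | B {Γ : Set (LSent A)} {φ : PLForm A} :
      PLCons (bels Γ) φ → WBD Γ (.bel φ)
  | Dbot {Γ : Set (LSent A)} {φ : PLForm A} :
      PLCons {φ} .falsum → WBD Γ (.dis φ)
  | WD {Γ : Set (LSent A)} {φ ψ : PLForm A} :
      LSent.dis ψ ∈ Γ → PLCons {φ} ψ → WBD Γ (.dis φ)

/-- The logic GBD: smallest relation closed under (B), (D⊥) and (GD). -/
inductive GBD {A : Type} : Set (LSent A) → LSent A → Prop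
  | B {Γ : Set (LSent A)} {φ : PLForm A} :
      PLCons (bels Γ) φ → GBD Γ (.bel φ)
  | Dbot {Γ : Set (LSent A)} {φ : PLForm A} :
      PLCons {φ} .falsum → GBD Γ (.dis φ)
  | GD {Γ : Set (LSent A)} {φ : PLForm A} :
      PLCons (PLForm.neg '' diss Γ) (.neg φ) → GBD Γ (.dis φ)

/-- The logic BD: smallest relation closed under (B), (D⊥) and (D). -/
inductive BD {A : Type} : Set (LSent A) → LSent A → Prop
  | B {Γ : Set (LSent A)} {φ : PLForm A} :
      PLCons (bels Γ) φ → BD Γ (.bel φ)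
  | Dbot {Γ : Set (LSent A)} {φ : PLForm A} :
      PLCons {φ} .falsum → BD Γ (.dis φ)
  | D {Γ : Set (LSent A)} {φ ψ : PLForm A} :
      LSent.dis ψ ∈ Γ → PLCons (insert φ (bels Γ)) ψ → BD Γ (.dis φ)

/-- The logic BN: smallest relation closed under (B), (D⊥), (WD) and (D→B). -/
inductive BN {A : Type} : Set (LSent A) → LSent A → Prop
  | B {Γ : Set (LSent A)} {φ : PLForm A} :
      PLCons (bels Γ) φ → BN Γ (.bel φ)
  | Dbot {Γ : Set (LSent A)} {φ : PLForm A} :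
      PLCons {φ} .falsum → BN Γ (.dis φ)
  | WD {Γ : Set (LSent A)} {φ ψ : PLForm A} :
      LSent.dis ψ ∈ Γ → PLCons {φ} ψ → BN Γ (.dis φ)
  | DtoB {Γ : Set (LSent A)} {φ : PLForm A} :
      BN Γ (.dis φ) → BN Γ (.bel (.neg φ))

/-- Satisfaction in a WBD-model `(M, 𝒩)` (also used for BD-models):
a belief `φ` holds iff `M ⊆ M(φ)`; a disbelief `φ̄` holds iff some
`N ∈ 𝒩` satisfies `N ⊆ M(¬φ)`. -/
def satWBD {A : Type} (M : Set (A → Bool)) (𝒩 : Set (Set (A → Bool))) :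
    LSent A → Prop
  | .bel φ => ∀ v ∈ M, PLForm.eval v φ = true
  | .dis φ => ∃ N ∈ 𝒩, ∀ v ∈ N, PLForm.eval v φ = false

/-- WBD-entailment: truth in all WBD-models (with `𝒩` nonempty) of `Γ`. -/
def WBDent {A : Type} (Γ : Set (LSent A)) (α : LSent A) : Prop :=
  ∀ (M : Set (A → Bool)) (𝒩 : Set (Set (A → Bool))), 𝒩.Nonempty →
    (∀ β ∈ Γ, satWBD M 𝒩 β) → satWBD M 𝒩 α

/-- Satisfaction in a GBD-model `(M, N)`. -/
def satGBD {A : Type} (M N : Set (A → Bool)) : LSent A → Prop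
  | .bel φ => ∀ v ∈ M, PLForm.eval v φ = true
  | .dis φ => ∀ v ∈ N, PLForm.eval v φ = false

/-- GBD-entailment: truth in all GBD-models of `Γ`. -/
def GBDent {A : Type} (Γ : Set (LSent A)) (α : LSent A) : Prop :=
  ∀ (M N : Set (A → Bool)), (∀ β ∈ Γ, satGBD M N β) → satGBD M N α

/-- BD-entailment: truth in all BD-models of `Γ`, i.e. WBD-models where
every `N ∈ 𝒩` is a subset of `M`. -/
def BDent {A : Type} (Γ : Set (LSent A)) (α : LSent A) : Prop :=
  ∀ (M : Set (A → Bool)) (𝒩 : Set (Set (A → Bool))), 𝒩.Nonempty →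
    (∀ N ∈ 𝒩, N ⊆ M) → (∀ β ∈ Γ, satWBD M 𝒩 β) → satWBD M 𝒩 α

/-- `Γ` is B-inconsistent iff `Γ_B ⊢_BD ⊥`. -/
def BIncons {A : Type} (Γ : Set (LSent A)) : Prop :=
  BD (Γ ∩ LB A) (.bel .falsum)

/-- `Γ` is D-inconsistent iff `Γ_D ⊢_BD ⊤̄`. -/
def DIncons {A : Type} (Γ : Set (LSent A)) : Prop :=
  BD (Γ ∩ LD A) (.dis .verum)

/-- `Γ` is BD-inconsistent iff `Γ ⊢_BD φ` and `Γ ⊢_BD φ̄` for some `φ ∈ L_B`. -/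
def BDIncons {A : Type} (Γ : Set (LSent A)) : Prop :=
  ∃ φ : PLForm A, BD Γ (.bel φ) ∧ BD Γ (.dis φ)

/-! Inclusion and monotonicity are read off the three rules. For idempotency, a belief
derived from derived beliefs is derived by transitivity of `⊢_PL`, and a disbelief
`φ̄` obtained by (WD) from a derived `ψ̄` is obtained directly, since `φ ⊢_PL ψ` composes
with the `ψ ⊢_PL χ` (or `ψ ⊢_PL ⊥`) that produced `ψ̄`. For compactness, (D⊥) uses no premise
and (WD) a single one; for (B) it is compactness of classical propositional logic, which
holds because the space of valuations `A → Bool` is compact and the set of models of each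
formula is closed in it. -/

namespace PLForm

variable {A : Type}

theorem continuous_eval (φ : PLForm A) : Continuous fun v : A → Bool => φ.eval v := by
  have binary {f g : (A → Bool) → Bool} (op : Bool → Bool → Bool)
      (hf : Continuous f) (hg : Continuous g) : Continuous fun v => op (f v) (g v) :=
    (continuous_of_discreteTopology (f := fun p : Bool × Bool => op p.1 p.2)).comp
      (hf.prodMk hg)
  induction φ with
  | atom a => exact continuous_apply a
  | falsum | verum => exact continuous_const
  | neg φ ih => exact continuous_of_discreteTopology.comp ih
  | conj φ ψ ihφ ihψ => exact binary (· && ·) ihφ ihψ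
  | disj φ ψ ihφ ihψ => exact binary (· || ·) ihφ ihψ
  | impl φ ψ ihφ ihψ => exact binary (fun a b => !a || b) ihφ ihψ

theorem isClosed_setOf_eval_eq (φ : PLForm A) (b : Bool) :
    IsClosed {v : A → Bool | φ.eval v = b} :=
  (isClosed_discrete {b}).preimage φ.continuous_eval

end PLForm

namespace PLCons

variable {A : Type} {X Y : Set (PLForm A)} {φ ψ χ : PLForm A}

theorem mono (hXY : X ⊆ Y) (h : PLCons X φ) : PLCons Y φ :=
  fun v hv => h v fun ψ hψ => hv ψ (hXY hψ)

theorem trans (hY : ∀ ψ ∈ Y, PLCons X ψ) (h : PLCons Y χ) : PLCons X χ :=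
  fun v hv => h v fun ψ hψ => hY ψ hψ v hv

theorem trans_singleton (h₁ : PLCons X ψ) (h₂ : PLCons {ψ} χ) : PLCons X χ :=
  trans (by simpa using h₁) h₂

theorem exists_finite_subset (h : PLCons X φ) : ∃ Y ⊆ X, Y.Finite ∧ PLCons Y φ := by
  have hno_countermodel : {v : A → Bool | φ.eval v = false} ∩
      ⋂ ψ : X, {v | ψ.1.eval v = true} = ∅ := by
    refine Set.eq_empty_of_forall_notMem fun v ⟨hφ, hX⟩ => ?_
    have := h v fun ψ hψ => Set.mem_iInter.1 hX ⟨ψ, hψ⟩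
    simp_all
  obtain ⟨u, hu⟩ := (φ.isClosed_setOf_eval_eq false).isCompact.elim_finite_subfamily_closed
    _ (fun ψ => ψ.1.isClosed_setOf_eval_eq true) hno_countermodel
  refine ⟨Subtype.val '' (u : Set X), by simp, u.finite_toSet.image _, fun v hv => ?_⟩
  by_contra hφ
  have hv' : v ∈ {v : A → Bool | φ.eval v = false} ∩ ⋂ ψ ∈ u, {v | ψ.1.eval v = true} :=
    ⟨by simpa using hφ, Set.mem_iInter₂.2 fun ψ hψ => hv ψ ⟨ψ, hψ, rfl⟩⟩
  exact Set.eq_empty_iff_forall_notMem.1 hu v hv'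

end PLCons

namespace WBD

variable {A : Type} {Γ Δ : Set (LSent A)} {α : LSent A} {φ : PLForm A}

theorem of_mem (h : α ∈ Γ) : WBD Γ α := by
  cases α with
  | bel φ => exact B fun v hv => hv φ h
  | dis φ => exact WD h fun v hv => hv φ rfl

theorem mono (hΓΔ : Γ ⊆ Δ) : WBD Γ α → WBD Δ α
  | B h => B (h.mono fun _ hψ => hΓΔ hψ)
  | Dbot h => Dbot h
  | WD hψ h => WD (hΓΔ hψ) h

theorem bel_iff : WBD Γ (.bel φ) ↔ PLCons (bels Γ) φ :=
  ⟨fun | B h => h, B⟩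

theorem of_closure : WBD {β | WBD Γ β} α → WBD Γ α
  | B h => B (h.trans fun _ hψ => bel_iff.1 hψ)
  | Dbot h => Dbot h
  | WD (hψ : WBD Γ _) h =>
    match hψ with
    | Dbot h' => Dbot (h.trans_singleton h')
    | WD hχ h' => WD hχ (h.trans_singleton h')

theorem exists_finite_subset : WBD Γ α → ∃ Γ' ⊆ Γ, Γ'.Finite ∧ WBD Γ' α
  | B h => by
    obtain ⟨Y, hY, hYfin, hYφ⟩ := h.exists_finite_subset
    exact ⟨LSent.bel '' Y, Set.image_subset_iff.2 hY, hYfin.image _,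
      B (hYφ.mono fun ψ hψ => ⟨ψ, hψ, rfl⟩)⟩
  | Dbot h => ⟨∅, Set.empty_subset _, Set.finite_empty, Dbot h⟩
  | WD hψ h => ⟨{_}, Set.singleton_subset_iff.2 hψ, Set.finite_singleton _, WD rfl h⟩

end WBD

/-- The consequence operation of WBD satisfies Inclusion, Idempotency,
Monotonicity and Compactness. -/
theorem wbd_tarskian_compact (A : Type) :
    (∀ Γ : Set (LSent A), Γ ⊆ {α | WBD Γ α}) ∧
    (∀ Γ : Set (LSent A), {α | WBD Γ α} = {α | WBD {β | WBD Γ β} α}) ∧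
    (∀ Γ Δ : Set (LSent A), Γ ⊆ Δ → {α | WBD Γ α} ⊆ {α | WBD Δ α}) ∧
    (∀ (Γ : Set (LSent A)) (α : LSent A), WBD Γ α →
      ∃ Γ' ⊆ Γ, Γ'.Finite ∧ WBD Γ' α) :=
  ⟨fun _ _ => WBD.of_mem,
    fun _ => Set.Subset.antisymm (fun _ => WBD.mono fun _ => WBD.of_mem) fun _ => WBD.of_closure,
    fun _ _ hΓΔ _ => WBD.mono hΓΔ,
    fun _ _ => WBD.exists_finite_subset⟩
end

section
/- Soundness and completeness of WBD: for every information set Γ ⊆ L and every α ∈ L, Γ ⊢_WBD α iff Γ ⊨_WBD α. -/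
/-! Soundness is a rule-by-rule check. For completeness, take the canonical model whose belief
set is the set of models of `Γ_B` and whose disbelief family consists of `M(¬ψ)` for each `ψ̄ ∈ Γ`
together with the full set `V`: `V` keeps the family nonempty and can only witness disbeliefs in
unsatisfiable formulas, which is exactly rule (D⊥), while `M(¬ψ) ⊆ M(¬φ)` is rule (WD). -/

section

variable {A : Type} {Γ : Set (LSent A)} {α : LSent A}

theorem PLCons.singleton_iff {φ ψ : PLForm A} :
    PLCons {φ} ψ ↔ ∀ v, φ.eval v = true → ψ.eval v = true := by
  simp [PLCons]

theorem PLCons.singleton_falsum_iff {φ : PLForm A} :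
    PLCons {φ} .falsum ↔ ∀ v, φ.eval v = false := by
  simp [PLCons.singleton_iff, PLForm.eval]

namespace WBD

theorem sound (h : WBD Γ α) : WBDent Γ α := by
  intro M 𝒩 h𝒩 hΓ
  cases h with
  | B hφ => exact fun v hv => hφ v fun ψ hψ => hΓ (.bel ψ) hψ v hv
  | Dbot hφ =>
    obtain ⟨N, hN⟩ := h𝒩
    exact ⟨N, hN, fun v _ => PLCons.singleton_falsum_iff.mp hφ v⟩
  | WD hψ hφψ =>
    obtain ⟨N, hN, hNψ⟩ := hΓ _ hψ
    refine ⟨N, hN, fun v hv => ?_⟩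
    by_contra hφ
    simpa [hNψ v hv] using PLCons.singleton_iff.mp hφψ v (by simpa using hφ)

def canonicalWorlds (Γ : Set (LSent A)) : Set (A → Bool) :=
  {v | ∀ φ ∈ bels Γ, φ.eval v = true}

def canonicalDisbeliefSets (Γ : Set (LSent A)) : Set (Set (A → Bool)) :=
  insert Set.univ ((fun ψ => {v | ψ.eval v = false}) '' diss Γ)

theorem satWBD_canonical_of_mem (hα : α ∈ Γ) :
    satWBD (canonicalWorlds Γ) (canonicalDisbeliefSets Γ) α := by
  cases α with
  | bel φ => exact fun v hv => hv φ hα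
  | dis ψ => exact ⟨_, Or.inr ⟨ψ, hα, rfl⟩, fun v hv => hv⟩

theorem of_satWBD_canonical (h : satWBD (canonicalWorlds Γ) (canonicalDisbeliefSets Γ) α) :
    WBD Γ α := by
  cases α with
  | bel φ => exact B h
  | dis φ =>
    obtain ⟨N, hN, hNφ⟩ := h
    rcases hN with rfl | ⟨ψ, hψ, rfl⟩
    · exact Dbot (PLCons.singleton_falsum_iff.mpr fun v => hNφ v trivial)
    · refine WD hψ (PLCons.singleton_iff.mpr fun v hφ => ?_)
      by_contra hψv
      simpa [hφ] using hNφ v (by simpa using hψv)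

theorem complete (h : WBDent Γ α) : WBD Γ α :=
  of_satWBD_canonical <| h _ _ ⟨Set.univ, Set.mem_insert _ _⟩ fun _ => satWBD_canonical_of_mem

end WBD

end

/-- Soundness and completeness of WBD. -/
theorem wbd_sound_complete (A : Type) (Γ : Set (LSent A)) (α : LSent A) :
    WBD Γ α ↔ WBDent Γ α :=
  ⟨WBD.sound, WBD.complete⟩
end

section
/- The logic GBD satisfies the property (Rej): for every information set Γ ⊆ L and all α, β ∈ L_B, if Γ ⊢_GBD β̄ and Γ ⊢_GBD (¬(α → β))‾ then Γ ⊢_GBD ᾱ. -/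
/-! Rule (D⊥) is subsumed by (GD), since an unsatisfiable `φ` has a valid negation. Hence
`Γ ⊢ φ̄` holds exactly when `Γ̄_D ⊢_PL ¬φ`, and (Rej) reduces to modus tollens:
`¬β` and `¬¬(α → β)` entail `¬α`. -/

lemma PLCons.neg_of_unsat {A : Type} {X : Set (PLForm A)} {φ : PLForm A}
    (h : PLCons {φ} .falsum) : PLCons X (.neg φ) := by
  intro v _
  cases hφ : PLForm.eval v φ
  · simp [PLForm.eval, hφ]
  · simpa [PLForm.eval] using h v (by simpa using hφ)

lemma PLCons.modus_tollens {A : Type} {X : Set (PLForm A)} {α β : PLForm A}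
    (hβ : PLCons X (.neg β)) (himp : PLCons X (.neg (.neg (.impl α β)))) :
    PLCons X (.neg α) := by
  intro v hv
  have hβv := hβ v hv
  have himpv := himp v hv
  simp only [PLForm.eval, Bool.not_not, Bool.not_eq_true'] at hβv himpv ⊢
  simpa [hβv] using himpv

theorem GBD.dis_iff {A : Type} {Γ : Set (LSent A)} {φ : PLForm A} :
    GBD Γ (.dis φ) ↔ PLCons (PLForm.neg '' diss Γ) (.neg φ) := by
  refine ⟨fun h => ?_, GBD.GD⟩
  cases h with
  | Dbot hunsat => exact PLCons.neg_of_unsat hunsat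
  | GD hcons => exact hcons

/-- GBD satisfies (Rej): if `Γ ⊢ β̄` and `Γ ⊢ (¬(α → β))‾` then `Γ ⊢ ᾱ`. -/
theorem gbd_rej (A : Type) (Γ : Set (LSent A)) (α β : PLForm A)
    (h1 : GBD Γ (.dis β)) (h2 : GBD Γ (.dis (.neg (.impl α β)))) :
    GBD Γ (.dis α) :=
  GBD.dis_iff.2 ((GBD.dis_iff.1 h1).modus_tollens (GBD.dis_iff.1 h2))
end

section
/- The relation ⊢_BD satisfies (D↛B): for every information set Γ ⊆ L, every Δ ⊆ L_D, and every φ ∈ L_B, Γ ⊢_BD φ iff Γ_B ∪ Δ ⊢_BD φ. -/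
theorem bels_union {A : Type} (Γ Δ : Set (LSent A)) : bels (Γ ∪ Δ) = bels Γ ∪ bels Δ :=
  rfl

@[simp]
theorem bels_inter_LB {A : Type} (Γ : Set (LSent A)) : bels (Γ ∩ LB A) = bels Γ := by
  ext φ
  simp [bels, LB]

theorem bels_eq_empty_of_subset_LD {A : Type} {Δ : Set (LSent A)} (hΔ : Δ ⊆ LD A) :
    bels Δ = ∅ :=
  Set.eq_empty_of_forall_notMem fun φ hφ => by
    obtain ⟨ψ, hψ⟩ := hΔ hφ
    cases hψ

theorem BD.bel_iff {A : Type} {Γ : Set (LSent A)} {φ : PLForm A} :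
    BD Γ (.bel φ) ↔ PLCons (bels Γ) φ :=
  ⟨fun h => by cases h; assumption, BD.B⟩

/-- `⊢_BD` satisfies (D↛B). -/
theorem bd_DnotB (A : Type) (Γ Δ : Set (LSent A)) (hΔ : Δ ⊆ LD A)
    (φ : PLForm A) :
    BD Γ (.bel φ) ↔ BD ((Γ ∩ LB A) ∪ Δ) (.bel φ) := by
  rw [BD.bel_iff, BD.bel_iff, bels_union, bels_inter_LB, bels_eq_empty_of_subset_LD hΔ,
    Set.union_empty]
end

section
/- In BD, disbelieving the tautology yields all disbeliefs but leaves beliefs unaffected: for every information set Γ ⊆ L and every φ ∈ L_B, (i) Γ ∪ {⊤̄} ⊢_BD φ̄, and (ii) Γ ∪ {⊤̄} ⊢_BD φ if and only if Γ ⊢_BD φ. -/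
theorem bels_insert_dis {A : Type} (Γ : Set (LSent A)) (ψ : PLForm A) :
    bels (insert (LSent.dis ψ) Γ) = bels Γ := by
  ext φ
  simp [bels]

theorem BD.bel_insert_dis {A : Type} (Γ : Set (LSent A)) (ψ φ : PLForm A) :
    BD (insert (LSent.dis ψ) Γ) (.bel φ) ↔ BD Γ (.bel φ) := by
  rw [BD.bel_iff, BD.bel_iff, bels_insert_dis]

theorem BD.dis_of_dis_verum_mem {A : Type} {Γ : Set (LSent A)}
    (h : LSent.dis .verum ∈ Γ) (φ : PLForm A) : BD Γ (.dis φ) :=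
  .D h fun _ _ => rfl

/-- In BD, disbelieving the tautology yields every disbelief but leaves
the beliefs unaffected. -/
theorem bd_disbelieve_top (A : Type) (Γ : Set (LSent A)) (φ : PLForm A) :
    BD (insert (LSent.dis .verum) Γ) (.dis φ) ∧
    (BD (insert (LSent.dis .verum) Γ) (.bel φ) ↔ BD Γ (.bel φ)) :=
  ⟨.dis_of_dis_verum_mem (Set.mem_insert _ _) φ, BD.bel_insert_dis Γ .verum φ⟩
end
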